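/- Let S, A, T, r, γ be a worst-path tree MDP and V* the unique bounded fixed point of the Bellman optimality operator B*. Suppose g : S → A is a deterministic policy that is greedy with respect to V*, i.e. for every s, min_{s' ∈ T s (g s)} V*(s') = max_{a ∈ A} min_{s' ∈ T s a} V*(s'). Then the stochastic policy π_g that puts all mass on g (π_g s a = 1 if a = g s and 0 otherwise) satisfies V^{π_g} = V*, where V^{π_g} is the unique bounded fixed point of B^{π_g}. In particular there exists a stationary deterministic optimal policy. -/
import Mathlib


open BoundedContinuousFunction

lemma abs_inf'_sub_inf'_le {S : Type*} (t : Finset S) (ht : t.Nonempty) (f g : S → ℝ)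
    (C : ℝ) (h : ∀ x ∈ t, |f x - g x| ≤ C) :
    |t.inf' ht f - t.inf' ht g| ≤ C := by
  rw [abs_sub_le_iff]
  constructor
  · obtain ⟨x, hx, hxe⟩ := Finset.exists_mem_eq_inf' ht g
    have h1 : t.inf' ht f ≤ f x := Finset.inf'_le _ hx
    have h2 := (abs_sub_le_iff.mp (h x hx)).1
    rw [hxe]; linarith
  · obtain ⟨x, hx, hxe⟩ := Finset.exists_mem_eq_inf' ht f
    have h1 : t.inf' ht g ≤ g x := Finset.inf'_le _ hx
    have h2 := (abs_sub_le_iff.mp (h x hx)).2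
    rw [hxe]; linarith

/-- A deterministic policy that is greedy with respect to the optimal worst-path value
`V*` is optimal: the value of the induced stochastic policy equals `V*`. -/
theorem greedy_policy_optimal {S A : Type*} [Fintype A] [Nonempty A] [DecidableEq A]
    [TopologicalSpace S] [DiscreteTopology S]
    (T : S → A → Finset S) (hT : ∀ s a, (T s a).Nonempty)
    (r : S → ℝ) (hr : ∀ s, r s = 0 ∨ r s = 1)
    (γ : ℝ) (hγ : γ ∈ Set.Ioo (0:ℝ) 1)
    (Vstar : S →ᵇ ℝ)
    (hfixStar : ∀ s, Vstar s = r s + γ * (1 - r s) *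
        Finset.univ.sup' Finset.univ_nonempty (fun a => (T s a).inf' (hT s a) Vstar))
    (g : S → A)
    (hgreedy : ∀ s, (T s (g s)).inf' (hT s (g s)) Vstar
        = Finset.univ.sup' Finset.univ_nonempty (fun a => (T s a).inf' (hT s a) Vstar))
    (πg : S → A → ℝ) (hπg : ∀ s a, πg s a = if a = g s then (1:ℝ) else 0)
    (Vpig : S →ᵇ ℝ)
    (hfixPig : ∀ s, Vpig s = r s + γ * (1 - r s) *
        ∑ a, πg s a * (T s a).inf' (hT s a) Vpig) :
    Vpig = Vstar := by
  obtain ⟨hγ0, hγ1⟩ := hγ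
  set d := dist Vpig Vstar with hd
  have hd0 : 0 ≤ d := dist_nonneg
  have key : dist Vpig Vstar ≤ γ * d := by
    refine (BoundedContinuousFunction.dist_le (by positivity)).mpr ?_
    intro s
    have hsum : (∑ a, πg s a * (T s a).inf' (hT s a) Vpig)
        = (T s (g s)).inf' (hT s (g s)) Vpig := by
      rw [Finset.sum_eq_single (g s)]
      · rw [hπg]; simp
      · intro b _ hb; rw [hπg]; simp [hb]
      · simp
    have h1 := hfixPig s
    have h2 := hfixStar s
    rw [← hgreedy s] at h2
    rw [hsum] at h1
    have hinf : |(T s (g s)).inf' (hT s (g s)) Vpig - (T s (g s)).inf' (hT s (g s)) Vstar| ≤ d := by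
      apply abs_inf'_sub_inf'_le
      intro x _
      exact (BoundedContinuousFunction.dist_coe_le_dist x).trans_eq' (Real.dist_eq _ _).symm
    have hdiff : Vpig s - Vstar s = γ * (1 - r s) *
        ((T s (g s)).inf' (hT s (g s)) Vpig - (T s (g s)).inf' (hT s (g s)) Vstar) := by
      rw [h1, h2]; ring
    rw [Real.dist_eq, hdiff, abs_mul]
    rcases hr s with h | h
    · rw [h]
      have he : |γ * (1 - 0)| = γ := by rw [abs_of_nonneg (by linarith)]; ring
      rw [he]
      exact mul_le_mul_of_nonneg_left hinf hγ0.le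
    · rw [h]
      simp only [sub_self, mul_zero, zero_mul, abs_zero]
      positivity
  have hk : d ≤ γ * d := key
  have : d = 0 := by nlinarith
  exact eq_of_dist_eq_zero this
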